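/- arXiv:math/0401277 — 2 statements merged into one kernel-verified Lean document; each statement's English description precedes it below -/
import Mathlib

section
/- With respect to the form ⟨(X,Y),(X',Y')⟩ = Re κ(X,X') − Re κ(Y,Y') on g × g, the orthogonal complement of k (the compact real form, diagonally embedded) equals k_C + b, where k_C is the diagonal of g × g and b = a + n is diagonally embedded via the real form. -/
/-!
Pairing `(X, Y)` with a diagonal element `(W, W)`, `W ∈ k`, gives `Re κ(X - Y, W)`, so the
orthogonal complement of `k` is `{(X, Y) : X - Y ⊥ k}` for the real part of `κ`. Since `κ` is real
on `k` and `g = k ⊕ i k`, writing `V = V₁ + i V₂` with `V₁, V₂ ∈ k` shows `Re κ(V, k) = 0` iff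
`κ(V₁, k) = 0`, iff `V₁ = 0` by nondegeneracy: the complement is
`{(X, Y) : conj (X - Y) = -(X - Y)}`.
Writing such a `D = X - Y` as `W + Z + N` in the Iwasawa decomposition, `conj D = -D` forces
`2W = -(N + conj N)`, and then `D = b - conj b` for `b = (Z + N) / 2 ∈ a + n`; conversely every
`b - conj b` is anti-fixed.
-/

section Conjugation

variable {M : Type*} [AddCommGroup M] [Module ℂ M] {σ : M →ₗ[ℝ] M}

theorem exists_eq_add_I_smul_of_apply_eq_self
    (hσI : ∀ x, σ (Complex.I • x) = -(Complex.I • σ x)) (hσσ : ∀ x, σ (σ x) = x) (x : M) :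
    ∃ x₁ x₂, σ x₁ = x₁ ∧ σ x₂ = x₂ ∧ x = x₁ + Complex.I • x₂ := by
  refine ⟨(2⁻¹ : ℝ) • (x + σ x), (2⁻¹ : ℝ) • -(Complex.I • (x - σ x)), ?_, ?_, ?_⟩
  · rw [map_smul, map_add, hσσ, add_comm]
  · rw [map_smul, map_neg, hσI, neg_neg, map_sub, hσσ, ← smul_neg, neg_sub]
  · rw [smul_comm, smul_neg, smul_smul, Complex.I_mul_I, neg_one_smul, neg_neg]
    module

variable {β : LinearMap.BilinForm ℂ M}

theorem im_apply_eq_zero_of_apply_eq_self (hβσ : ∀ x y, β (σ x) (σ y) = starRingEnd ℂ (β x y))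
    {x y : M} (hx : σ x = x) (hy : σ y = y) : (β x y).im = 0 := by
  have h := congrArg Complex.im (hβσ x y)
  rw [hx, hy, Complex.conj_im] at h
  linarith

theorem re_apply_eq_zero_of_apply_eq_neg (hβσ : ∀ x y, β (σ x) (σ y) = starRingEnd ℂ (β x y))
    {x y : M} (hx : σ x = -x) (hy : σ y = y) : (β x y).re = 0 := by
  have h := congrArg Complex.re (hβσ x y)
  rw [hx, hy, Complex.conj_re, LinearMap.map_neg₂, Complex.neg_re] at h
  linarith

theorem forall_re_apply_eq_zero_iff (hβ : β.SeparatingLeft)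
    (hσI : ∀ x, σ (Complex.I • x) = -(Complex.I • σ x)) (hσσ : ∀ x, σ (σ x) = x)
    (hβσ : ∀ x y, β (σ x) (σ y) = starRingEnd ℂ (β x y)) (v : M) :
    (∀ w, σ w = w → (β v w).re = 0) ↔ σ v = -v := by
  refine ⟨fun hv ↦ ?_, fun hv w hw ↦ re_apply_eq_zero_of_apply_eq_neg hβσ hv hw⟩
  obtain ⟨v₁, v₂, hv₁, hv₂, rfl⟩ := exists_eq_add_I_smul_of_apply_eq_self hσI hσσ v
  -- `β v₁ w` and `β v₂ w` are real, so `Re β (v₁ + i v₂) w = β v₁ w`.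
  have hv₁k : ∀ w, σ w = w → β v₁ w = 0 := fun w hw ↦ by
    have h := hv w hw
    simp only [map_add, map_smul, LinearMap.add_apply, LinearMap.smul_apply, smul_eq_mul,
      Complex.add_re, Complex.mul_re, Complex.I_re, Complex.I_im, zero_mul, one_mul,
      im_apply_eq_zero_of_apply_eq_self hβσ hv₂ hw] at h
    exact Complex.ext (by rw [Complex.zero_re]; linarith)
      (im_apply_eq_zero_of_apply_eq_self hβσ hv₁ hw)
  have hv₁0 : v₁ = 0 := hβ v₁ fun y ↦ by
    obtain ⟨y₁, y₂, hy₁, hy₂, rfl⟩ := exists_eq_add_I_smul_of_apply_eq_self hσI hσσ y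
    simp [hv₁k y₁ hy₁, hv₁k y₂ hy₂]
  rw [hv₁0, zero_add, hσI, hv₂]

end Conjugation

theorem eq_sub_apply_half_of_apply_eq_neg {E : Type*} [AddCommGroup E] [Module ℝ E]
    {σ : E →ₗ[ℝ] E} {d w z n : E} (hd : σ d = -d) (hw : σ w = w) (hz : σ z = -z)
    (hsum : d = w + z + n) : d = (2⁻¹ : ℝ) • (z + n) - σ ((2⁻¹ : ℝ) • (z + n)) := by
  have hw' : (2 : ℝ) • w = -(n + σ n) := by
    rw [hsum, map_add, map_add, hw, hz] at hd
    rw [two_smul, ← sub_eq_zero, ← sub_eq_zero.mpr hd]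
    abel
  rw [map_smul, map_add, hz, hsum,
    show w = (2⁻¹ : ℝ) • (2 : ℝ) • w by rw [smul_smul]; norm_num, hw']
  module

theorem orthogonal_complement_of_k_general
    (g : Type*) [LieRing g] [LieAlgebra ℂ g] [Module.Finite ℂ g]
    [LieAlgebra.IsKilling ℂ g]
    (conj : g →ₗ[ℝ] g)
    (hconjI : ∀ X : g, conj (Complex.I • X) = -(Complex.I • conj X))
    (hconj2 : ∀ X : g, conj (conj X) = X)
    (hconjκ : ∀ X Y : g,
      killingForm ℂ g (conj X) (conj Y) = (starRingEnd ℂ) (killingForm ℂ g X Y))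
    (k : Set g) (hk : k = {X : g | conj X = X})
    (a : Submodule ℝ g) (n : Submodule ℂ g)
    (ha : ∀ Z ∈ a, conj Z = -Z)
    (hIw : ∀ X : g, ∃ W Z N, W ∈ k ∧ Z ∈ a ∧ N ∈ n ∧ X = W + Z + N)
    (B : g × g → g × g → ℝ)
    (hB : ∀ U V : g × g,
      B U V = (killingForm ℂ g U.1 V.1).re - (killingForm ℂ g U.2 V.2).re) :
    {U : g × g | ∀ W ∈ k, B U (W, W) = 0}
      = {U : g × g | ∃ Z : g, ∃ Za ∈ a, ∃ N ∈ n,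
          U = (Z, Z) + (Za + N, conj (Za + N))} := by
  ext ⟨X, Y⟩
  have horth : (∀ W ∈ k, B (X, Y) (W, W) = 0) ↔ conj (X - Y) = -(X - Y) := by
    rw [← forall_re_apply_eq_zero_iff (LieAlgebra.IsKilling.killingForm_nondegenerate ℂ g).1
      hconjI hconj2 hconjκ, hk]
    simp only [Set.mem_ofPred_eq, hB, map_sub, LinearMap.sub_apply, Complex.sub_re]
  simp only [Set.mem_ofPred_eq, horth, Prod.ext_iff, Prod.fst_add, Prod.snd_add]
  constructor
  · intro hD
    obtain ⟨W, Z, N, hW, hZ, hN, hsum⟩ := hIw (X - Y)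
    rw [hk] at hW
    have hb := eq_sub_apply_half_of_apply_eq_neg hD hW (ha Z hZ) hsum
    refine ⟨Y - conj ((2⁻¹ : ℝ) • (Z + N)), (2⁻¹ : ℝ) • Z, a.smul_mem _ hZ, (2⁻¹ : ℝ) • N,
      n.smul_of_tower_mem _ hN, ?_, by rw [smul_add]; abel⟩
    rw [← smul_add]
    linear_combination (norm := abel) hb
  · rintro ⟨Z, Za, -, N, -, rfl, rfl⟩
    rw [add_sub_add_left_eq_sub, map_sub, hconj2, neg_sub]

theorem orthogonal_complement_of_k
    (g : Type*) [LieRing g] [LieAlgebra ℂ g] [Module.Finite ℂ g]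
    [LieAlgebra.IsKilling ℂ g]
    (conj : g →ₗ[ℝ] g)
    (hconjI : ∀ X : g, conj (Complex.I • X) = -(Complex.I • conj X))
    (hconj2 : ∀ X : g, conj (conj X) = X)
    (hconjκ : ∀ X Y : g,
      killingForm ℂ g (conj X) (conj Y) = (starRingEnd ℂ) (killingForm ℂ g X Y))
    (k : Set g) (hk : k = {X : g | conj X = X})
    (a : Submodule ℝ g) (n nbar : Submodule ℂ g)
    (ha : ∀ Z ∈ a, conj Z = -Z)
    (hconjn : ∀ X : g, X ∈ n ↔ conj X ∈ nbar)
    (hIw : ∀ X : g, ∃ W Z N, W ∈ k ∧ Z ∈ a ∧ N ∈ n ∧ X = W + Z + N)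
    (hind : ∀ W Z N, W ∈ k → Z ∈ a → N ∈ n → W + Z + N = 0 →
      W = 0 ∧ Z = 0 ∧ N = 0)
    (B : g × g → g × g → ℝ)
    (hB : ∀ U V : g × g,
      B U V = (killingForm ℂ g U.1 V.1).re - (killingForm ℂ g U.2 V.2).re) :
    {U : g × g | ∀ W ∈ k, B U (W, W) = 0}
      = {U : g × g | ∃ Z : g, ∃ Za ∈ a, ∃ N ∈ n,
          U = (Z, Z) + (Za + N, conj (Za + N))} :=
  orthogonal_complement_of_k_general g conj hconjI hconj2 hconjκ k hk a n ha hIw B hB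
end

section
/- Under the real Lie algebra isomorphism φ: g_C → g × g, X + iY ↦ (X + jY, X̄ + jȲ), the image of k_C is the diagonal {(Z,Z) : Z ∈ g}, the image of a_C is {(Z,−Z) : Z ∈ a + ja}, and the image of n_C is n × n̄. -/
/- STATEMENT 13: Under the real Lie algebra isomorphism
`φ: g_C → g × g`, `X + iY ↦ (X + jY, X̄ + jȲ)` (here `g_C = g ⊗_ℝ ℂ` is modelled
as pairs `(X, Y) ↔ X + iY`), the image of `k_C` is the diagonal
`{(Z,Z) : Z ∈ g}`, the image of `a_C` is `{(Z,−Z) : Z ∈ a + ja}`, and the image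
of `n_C` is `n × n̄`.  Here `j = I` is the complex structure of `g`, `conj` the
conjugation w.r.t. the compact real form `k = {X : conj X = X}`,
`a ⊆ p = jk` (so `conj = -id` on `a`), and `n̄ = conj(n)`. -/
theorem phi_images_of_kC_aC_nC
    (g : Type*) [LieRing g] [LieAlgebra ℂ g]
    (conj : g →ₗ[ℝ] g)
    (hconjI : ∀ X : g, conj (Complex.I • X) = -(Complex.I • conj X))
    (hconj2 : ∀ X : g, conj (conj X) = X)
    (a : Submodule ℝ g) (n nbar : Submodule ℂ g)
    (ha : ∀ Z ∈ a, conj Z = -Z)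
    (hconjn : ∀ X : g, X ∈ n ↔ conj X ∈ nbar)
    (φ : g × g → g × g)
    (hφ : ∀ p : g × g,
      φ p = (p.1 + Complex.I • p.2, conj p.1 + Complex.I • conj p.2)) :
    φ '' {p : g × g | conj p.1 = p.1 ∧ conj p.2 = p.2}
        = {q : g × g | q.1 = q.2} ∧
    φ '' {p : g × g | p.1 ∈ a ∧ p.2 ∈ a}
        = {q : g × g | (∃ Z₁ ∈ a, ∃ Z₂ ∈ a, q.1 = Z₁ + Complex.I • Z₂) ∧
            q.2 = -q.1} ∧
    φ '' {p : g × g | p.1 ∈ n ∧ p.2 ∈ n}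
        = {q : g × g | q.1 ∈ n ∧ q.2 ∈ nbar} := by
  have key : ∀ Z : g, Complex.I • Complex.I • Z = -Z := fun Z => by
    rw [smul_smul, Complex.I_mul_I, neg_one_smul]
  have hrs : ∀ (r : ℝ) (v : g), r • v = (r : ℂ) • v := fun r v => by
    rw [← smul_one_smul ℂ r v, Complex.real_smul, mul_one]
  refine ⟨?_, ?_, ?_⟩
  · ext q
    simp only [Set.mem_image, Set.mem_setOf_eq]
    constructor
    · rintro ⟨⟨X, Y⟩, ⟨hX, hY⟩, rfl⟩
      simp only [hφ, hX, hY]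
    · rintro hq
      obtain ⟨Z, Z'⟩ := q
      simp only at hq
      subst hq
      set X := (2⁻¹:ℝ) • (Z + conj Z) with hXdef
      set Y := -((2⁻¹:ℝ) • (Complex.I • (Z - conj Z))) with hYdef
      have hX : conj X = X := by
        simp only [hXdef, map_smul, map_add, hconj2]; rw [add_comm]
      have hY : conj Y = Y := by
        simp only [hYdef, map_neg, map_smul, map_sub, hconjI, hconj2,
          smul_neg, neg_neg, neg_sub, ← smul_sub]
        rw [← neg_sub Z (conj Z), smul_neg, smul_neg]
      have h1 : Complex.I • Y = (2⁻¹:ℝ) • (Z - conj Z) := by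
        rw [hYdef, smul_neg, smul_comm, key, smul_neg, neg_neg]
      refine ⟨(X, Y), ⟨hX, hY⟩, ?_⟩
      simp only [hφ, hX, hY, h1]
      rw [Prod.mk.injEq, hXdef]
      constructor <;> module
  · ext q
    simp only [Set.mem_image, Set.mem_setOf_eq]
    constructor
    · rintro ⟨⟨X, Y⟩, ⟨hX, hY⟩, rfl⟩
      simp only [hφ]
      refine ⟨⟨X, hX, Y, hY, rfl⟩, ?_⟩
      rw [ha X hX, ha Y hY, smul_neg, neg_add]
    · rintro ⟨⟨Z₁, hZ₁, Z₂, hZ₂, hq1⟩, hq2⟩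
      refine ⟨(Z₁, Z₂), ⟨hZ₁, hZ₂⟩, ?_⟩
      simp only [hφ, ha Z₁ hZ₁, ha Z₂ hZ₂]
      obtain ⟨q1, q2⟩ := q
      simp only at hq1 hq2 ⊢
      rw [hq1] at hq2 ⊢
      rw [hq2, smul_neg, neg_add]
  · ext q
    simp only [Set.mem_image, Set.mem_setOf_eq]
    constructor
    · rintro ⟨⟨X, Y⟩, ⟨hX, hY⟩, rfl⟩
      simp only [hφ]
      exact ⟨n.add_mem hX (n.smul_mem _ hY),
        nbar.add_mem ((hconjn X).mp hX) (nbar.smul_mem _ ((hconjn Y).mp hY))⟩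
    · rintro ⟨h1, h2⟩
      obtain ⟨W₁, W₂⟩ := q
      simp only at h1 h2
      have hcW₂ : conj W₂ ∈ n := (hconjn _).mpr (by rw [hconj2]; exact h2)
      refine ⟨((2⁻¹:ℝ) • (W₁ + conj W₂), -((2⁻¹:ℝ) • (Complex.I • (W₁ - conj W₂)))),
        ⟨?_, ?_⟩, ?_⟩
      · dsimp only
        rw [hrs]
        exact n.smul_mem _ (n.add_mem h1 hcW₂)
      · dsimp only
        rw [hrs, smul_smul, ← neg_smul]
        exact n.smul_mem _ (n.sub_mem h1 hcW₂)
      · simp only [hφ]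
        have h1' : Complex.I • -((2⁻¹:ℝ) • (Complex.I • (W₁ - conj W₂)))
            = (2⁻¹:ℝ) • (W₁ - conj W₂) := by
          rw [smul_neg, smul_comm, key, smul_neg, neg_neg]
        have h2' : conj (-((2⁻¹:ℝ) • (Complex.I • (W₁ - conj W₂))))
            = (2⁻¹:ℝ) • (Complex.I • (conj W₁ - W₂)) := by
          simp only [map_neg, map_smul, map_sub, hconjI, hconj2, smul_neg, neg_neg]
        have h3' : Complex.I • ((2⁻¹:ℝ) • (Complex.I • (conj W₁ - W₂)))
            = -((2⁻¹:ℝ) • (conj W₁ - W₂)) := by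
          rw [smul_comm, key, smul_neg]
        rw [h1', h2', h3']
        simp only [map_smul, map_add, hconj2]
        rw [Prod.mk.injEq]
        constructor <;> module
end
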